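/- arXiv:2605.24909 — 2 statements merged into one kernel-verified Lean document; each statement's English description precedes it below -/
import Mathlib

section
/- Let U be the Lucas sequence with parameters P, Q where Q = ±1, let A be a nonzero integer, and let n_1, …, n_r be pairwise coprime positive integers with each U_{n_i} ≠ 0. If A·y² = U_{n_1}·…·U_{n_r} for some integer y, then for every index i there exist a squarefree integer e_i (possibly negative) and an integer s_i with U_{n_i} = e_i·s_i², and every prime divisor of e_i divides A. -/
lemma lucas_addition (P Q : ℤ) (U : ℕ → ℤ) (h0 : U 0 = 0) (h1 : U 1 = 1)
    (hrec : ∀ n, U (n + 2) = P * U (n + 1) + Q * U n) :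
    ∀ m k, U (m + k + 1) = U (m + 1) * U (k + 1) + Q * (U m * U k) := by
  intro m
  induction m using Nat.twoStepInduction with
  | zero => intro k; simp [h0, h1]
  | one =>
    intro k
    have h2 : U 2 = P := by have := hrec 0; rw [h0, h1] at this; linarith
    rw [show 1 + k + 1 = k + 2 from by omega, hrec k, show (1:ℕ)+1 = 2 from rfl, h2, h1]
    ring
  | more m ih ih1 =>
    intro k
    have i0 := ih k
    have i1 := ih1 k
    have r0 := hrec m
    have r1 := hrec (m + 1)
    have rk := hrec (m + k + 1)
    simp only [show m+1+k+1 = m+k+2 from by omega, show m+1+1 = m+2 from by omega,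
      show m+1+2 = m+3 from by omega, show m+k+1+2 = m+k+3 from by omega,
      show m+k+1+1 = m+k+2 from by omega, show m+2+k+1 = m+k+3 from by omega,
      show m+2+1 = m+3 from by omega] at *
    rw [rk, i1, i0, r1, r0]
    ring

lemma lucas_consec (P Q : ℤ) (U : ℕ → ℤ) (h0 : U 0 = 0) (h1 : U 1 = 1)
    (hrec : ∀ n, U (n + 2) = P * U (n + 1) + Q * U n) (hQ : Q = 1 ∨ Q = -1) :
    ∀ k, IsCoprime (U k) (U (k + 1)) := by
  intro k
  induction k with
  | zero => rw [h0, h1]; exact isCoprime_one_right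
  | succ k ih =>
    have hQc : IsCoprime (U (k + 1)) Q := by
      rcases hQ with h | h <;> rw [h]
      · exact isCoprime_one_right
      · exact isCoprime_one_right.neg_right
    have key : IsCoprime (U (k + 1)) (Q * U k + U (k + 1) * P) :=
      (hQc.mul_right ih.symm).add_mul_left_right P
    have e2 : U (k + 1 + 1) = Q * U k + U (k + 1) * P := by
      rw [show k+1+1 = k+2 from by omega, hrec]; ring
    rw [e2]; exact key

lemma lucas_dvd_mul (P Q : ℤ) (U : ℕ → ℤ) (h0 : U 0 = 0) (h1 : U 1 = 1)
    (hrec : ∀ n, U (n + 2) = P * U (n + 1) + Q * U n)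
    (d : ℤ) (a : ℕ) (hd : d ∣ U a) : ∀ k, d ∣ U (k * a) := by
  intro k
  induction k with
  | zero => simp [h0]
  | succ k ih =>
    rcases Nat.eq_zero_or_pos (k * a) with h | h
    · rw [Nat.succ_mul, h, Nat.zero_add]; exact hd
    · obtain ⟨m, hm⟩ : ∃ m, k * a = m + 1 := ⟨k * a - 1, by omega⟩
      rw [hm] at ih
      have key := lucas_addition P Q U h0 h1 hrec m a
      rw [Nat.succ_mul, hm, show m + 1 + a = m + a + 1 from by omega, key]
      exact dvd_add (dvd_mul_of_dvd_left ih _) ((hd.mul_left (U m)).mul_left Q)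

lemma lucas_dvd_sub (P Q : ℤ) (U : ℕ → ℤ) (h0 : U 0 = 0) (h1 : U 1 = 1)
    (hrec : ∀ n, U (n + 2) = P * U (n + 1) + Q * U n) (hQ : Q = 1 ∨ Q = -1)
    (π : ℤ) (hπ : Prime π) (m k : ℕ)
    (hm : 0 < m) (hdm : π ∣ U m) (hdk : π ∣ U (m + k)) : π ∣ U k := by
  rcases k with _ | k0
  · rw [h0]; exact dvd_zero π
  · have key := lucas_addition P Q U h0 h1 hrec k0 m
    rw [show m + (k0 + 1) = k0 + m + 1 from by omega, key] at hdk
    have h2 : π ∣ U (k0 + 1) * U (m + 1) := by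
      have hq : π ∣ Q * (U k0 * U m) := (hdm.mul_left (U k0)).mul_left Q
      have := dvd_sub hdk hq
      simpa using this
    rcases hπ.dvd_mul.mp h2 with h | h
    · exact h
    · exfalso
      obtain ⟨u, v, huv⟩ := lucas_consec P Q U h0 h1 hrec hQ m
      have : π ∣ 1 := by
        rw [← huv]
        exact dvd_add ((hdm.mul_left u)) ((h.mul_left v))
      exact hπ.not_unit (isUnit_of_dvd_one this)

lemma lucas_dvd_gcd (P Q : ℤ) (U : ℕ → ℤ) (h0 : U 0 = 0) (h1 : U 1 = 1)
    (hrec : ∀ n, U (n + 2) = P * U (n + 1) + Q * U n) (hQ : Q = 1 ∨ Q = -1)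
    (π : ℤ) (hπ : Prime π) :
    ∀ a b, π ∣ U a → π ∣ U b → π ∣ U (Nat.gcd a b) := by
  intro a
  induction a using Nat.strong_induction_on with
  | _ a ih =>
    intro b ha hb
    rcases Nat.eq_zero_or_pos a with h | h
    · subst h; rwa [Nat.gcd_zero_left]
    · rw [Nat.gcd_rec]
      have hmod : π ∣ U (b % a) := by
        have hmul := lucas_dvd_mul P Q U h0 h1 hrec π a ha (b / a)
        have hdm := Nat.div_add_mod b a
        rcases Nat.eq_zero_or_pos (b / a * a) with h0' | h0'
        · have : b % a = b := by
            have : a * (b / a) = b / a * a := Nat.mul_comm _ _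
            omega
          rwa [this]
        · refine lucas_dvd_sub P Q U h0 h1 hrec hQ π hπ (b / a * a) (b % a) h0' hmul ?_
          rw [show b / a * a + b % a = b from by rw [Nat.mul_comm]; exact hdm]
          exact hb
      exact ih (b % a) (Nat.mod_lt _ h) a hmod ha

theorem lucas_square_class_rigidity
    (P Q : ℤ) (hQ : Q = 1 ∨ Q = -1)
    (U : ℕ → ℤ) (h0 : U 0 = 0) (h1 : U 1 = 1)
    (hrec : ∀ n, U (n + 2) = P * U (n + 1) + Q * U n)
    (A : ℤ) (hA : A ≠ 0)
    (r : ℕ) (n : Fin r → ℕ) (hpos : ∀ i, 0 < n i)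
    (hcop : ∀ i j, i ≠ j → Nat.Coprime (n i) (n j))
    (hne : ∀ i, U (n i) ≠ 0)
    (y : ℤ) (heq : A * y ^ 2 = ∏ i, U (n i)) :
    ∀ i, ∃ e s : ℤ, U (n i) = e * s ^ 2 ∧ Squarefree e ∧
      ∀ p : ℕ, p.Prime → (p : ℤ) ∣ e → (p : ℤ) ∣ A := by
  intro i
  obtain ⟨a, b, hab, hsf⟩ := Nat.sq_mul_squarefree (U (n i)).natAbs
  have hNi : (U (n i)).natAbs ≠ 0 := Int.natAbs_ne_zero.mpr (hne i)
  have ha0 : a ≠ 0 := by rintro rfl; simp at hab; exact hNi hab.symm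
  -- key claim: every prime dividing a divides A
  have key : ∀ p : ℕ, p.Prime → p ∣ a → (p : ℤ) ∣ A := by
    intro p hp hpa
    by_contra hpA
    have hπ : Prime (p : ℤ) := Nat.prime_iff_prime_int.mp hp
    -- p divides U (n i)
    have hpUi : (p : ℤ) ∣ U (n i) := by
      rw [Int.natCast_dvd]
      exact hpa.trans ⟨b ^ 2, by rw [← hab]; ring⟩
    -- p does not divide U (n j) for j ≠ i
    have hpUj : ∀ j, j ≠ i → ¬ (p : ℤ) ∣ U (n j) := by
      intro j hji hdvd
      have := lucas_dvd_gcd P Q U h0 h1 hrec hQ (p : ℤ) hπ (n i) (n j) hpUi hdvd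
      rw [hcop i j (Ne.symm hji), h1] at this
      exact hπ.not_unit (isUnit_of_dvd_one this)
    -- pass to natAbs
    have hy : y ≠ 0 := by
      rintro rfl
      apply Finset.prod_ne_zero_iff.mpr (fun j _ => hne j)
      rw [← heq]; ring
    have hprod : A.natAbs * y.natAbs ^ 2 = ∏ j, (U (n j)).natAbs := by
      have := congrArg Int.natAbs heq
      rwa [Int.natAbs_mul, Int.natAbs_pow, show (∏ j, U (n j)).natAbs
        = ∏ j, (U (n j)).natAbs from map_prod Int.natAbsHom _ _] at this
    -- factorizations
    have hAn : A.natAbs ≠ 0 := Int.natAbs_ne_zero.mpr hA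
    have hyn : y.natAbs ≠ 0 := Int.natAbs_ne_zero.mpr hy
    have hL : (A.natAbs * y.natAbs ^ 2).factorization p
        = A.natAbs.factorization p + 2 * y.natAbs.factorization p := by
      rw [Nat.factorization_mul hAn (pow_ne_zero 2 hyn), Nat.factorization_pow]
      simp
    have hA0 : A.natAbs.factorization p = 0 := by
      apply Nat.factorization_eq_zero_of_not_dvd
      intro hd
      exact hpA (Int.natCast_dvd.mpr hd)
    have hR : (∏ j, (U (n j)).natAbs).factorization p
        = ((U (n i)).natAbs).factorization p := by
      rw [Nat.factorization_prod (fun j _ => Int.natAbs_ne_zero.mpr (hne j))]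
      rw [Finsupp.finset_sum_apply]
      apply Finset.sum_eq_single_of_mem i (Finset.mem_univ i)
      intro j _ hji
      apply Nat.factorization_eq_zero_of_not_dvd
      intro hd
      exact hpUj j hji (Int.natCast_dvd.mpr hd)
    have hva : a.factorization p = 1 := by
      have hle := (Nat.squarefree_iff_factorization_le_one ha0).mp hsf p
      have hpos' := Nat.Prime.factorization_pos_of_dvd hp ha0 hpa
      omega
    have hb0 : b ≠ 0 := by rintro rfl; simp at hab; exact hNi hab.symm
    have hUi : ((U (n i)).natAbs).factorization p
        = 2 * b.factorization p + 1 := by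
      rw [← hab, Nat.factorization_mul (pow_ne_zero 2 hb0) ha0, Nat.factorization_pow]
      simp [hva]
    have hfin : (A.natAbs * y.natAbs ^ 2).factorization p
        = (∏ j, (U (n j)).natAbs).factorization p := by rw [hprod]
    rw [hL, hA0, hR, hUi] at hfin
    omega
  rcases Int.natAbs_eq (U (n i)) with hs | hs
  · refine ⟨(a : ℤ), (b : ℤ), ?_, ?_, ?_⟩
    · rw [hs, ← hab]; push_cast; ring
    · exact Int.squarefree_natAbs.mp (by simpa using hsf)
    · intro p hp hpe
      exact key p hp (Int.natCast_dvd_natCast.mp hpe)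
  · refine ⟨-(a : ℤ), (b : ℤ), ?_, ?_, ?_⟩
    · rw [hs, ← hab]; push_cast; ring
    · rw [← Int.squarefree_natAbs]; simpa using hsf
    · intro p hp hpe
      rw [dvd_neg] at hpe
      exact key p hp (Int.natCast_dvd_natCast.mp hpe)
end

section
/- Let U be the Lucas sequence with parameters P, Q where Q = ±1, let A be a nonzero integer, and let n_1, …, n_r be pairwise coprime positive integers with each U_{n_i} ≠ 0. Suppose A·y² = U_{n_1}·…·U_{n_r} with y ∈ ℤ, and let p be a prime dividing A. Then p divides exactly one of the terms, say U_{n_j}, and v_p(U_{n_j}) ≡ v_p(A) (mod 2) with v_p(U_{n_j}) ≥ v_p(A). -/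
section Aux

variable {P Q : ℤ} {U : ℕ → ℤ}

private lemma lucas_add (h0 : U 0 = 0) (h1 : U 1 = 1)
    (hrec : ∀ n, U (n + 2) = P * U (n + 1) + Q * U n) :
    ∀ m k, U (m + k + 1) = U (m + 1) * U (k + 1) + Q * U m * U k := by
  intro m
  induction m using Nat.strong_induction_on with
  | _ m ih =>
    match m with
    | 0 => intro k; simp [h0, h1]
    | 1 =>
      intro k
      have h2 : U 2 = P := by rw [hrec 0]; simp [h0, h1]
      have := hrec k
      simp only [show 1 + k + 1 = k + 2 by ring] at *
      rw [this, h2, h1]; ring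
    | (m + 2) =>
      intro k
      have e1 := ih (m + 1) (by omega) k
      have e0 := ih m (by omega) k
      have r1 := hrec (m + k + 1)
      have r2 := hrec (m + 1)
      have h3 : m + 2 + k + 1 = (m + k + 1) + 2 := by ring
      rw [h3, r1, show m + k + 1 + 1 = (m+1) + k + 1 by ring, e1, e0,
        show m + 2 + 1 = m + 1 + 2 by ring, r2]
      simp only [show m + 1 + 1 = m + 2 by ring]
      rw [hrec m]
      ring

private lemma lucas_adj (hQ : Q = 1 ∨ Q = -1) (h0 : U 0 = 0) (h1 : U 1 = 1)
    (hrec : ∀ n, U (n + 2) = P * U (n + 1) + Q * U n) :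
    ∀ m, IsCoprime (U m) (U (m + 1)) := by
  intro m
  induction m with
  | zero => rw [h0, h1]; exact isCoprime_zero_left.mpr isUnit_one
  | succ m ih =>
    have hq : IsCoprime (U (m + 1)) Q := by
      rcases hQ with h | h
      · rw [h]; exact isCoprime_one_right
      · rw [h]; exact isCoprime_one_right.neg_right
    have h2 : IsCoprime (U (m + 1)) (Q * U m) := hq.mul_right ih.symm
    have h3 := h2.add_mul_left_right P
    rwa [show Q * U m + U (m+1) * P = P * U (m+1) + Q * U m by ring, ← hrec m] at h3

private lemma lucas_cop (hQ : Q = 1 ∨ Q = -1) (h0 : U 0 = 0) (h1 : U 1 = 1)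
    (hrec : ∀ n, U (n + 2) = P * U (n + 1) + Q * U n) :
    ∀ m k, Nat.Coprime m k → IsCoprime (U m) (U k) := by
  have step : ∀ a t, IsCoprime (U (a + 1)) (U t) → IsCoprime (U (a + 1)) (U (a + 1 + t)) := by
    intro a t hc
    have hQ' : IsCoprime (U (a + 1)) Q := by
      rcases hQ with h | h
      · rw [h]; exact isCoprime_one_right
      · rw [h]; exact isCoprime_one_right.neg_right
    have hq : IsCoprime (U (a + 1)) (Q * U a) :=
      hQ'.mul_right (lucas_adj hQ h0 h1 hrec a).symm
    have h2 : IsCoprime (U (a + 1)) (Q * U a * U t) := hq.mul_right hc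
    have h3 := h2.add_mul_left_right (U (t + 1))
    have e := lucas_add h0 h1 hrec a t
    rwa [show Q * U a * U t + U (a+1) * U (t+1) = U (a+1) * U (t+1) + Q * U a * U t by ring,
      ← e, show a + t + 1 = a + 1 + t by ring] at h3
  suffices H : ∀ N m k, m + k ≤ N → Nat.Coprime m k → IsCoprime (U m) (U k) by
    intro m k hmk; exact H (m + k) m k le_rfl hmk
  intro N
  induction N with
  | zero =>
    intro m k hle hc
    have hm : m = 0 := by omega
    have hk : k = 0 := by omega
    subst hm; subst hk
    exact absurd hc (by simp [Nat.Coprime])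
  | succ N ih =>
    have main : ∀ m k, m < k → m + k ≤ N + 1 → Nat.Coprime m k → IsCoprime (U m) (U k) := by
      intro m k hlt hle hc
      rcases Nat.eq_zero_or_pos m with hm | hm
      · subst hm
        have : k = 1 := Nat.coprime_zero_left k |>.mp hc
        subst this
        rw [h0, h1]; exact isCoprime_zero_left.mpr isUnit_one
      · obtain ⟨a, rfl⟩ : ∃ a, m = a + 1 := ⟨m - 1, by omega⟩
        obtain ⟨t, rfl⟩ : ∃ t, k = (a + 1) + t := ⟨k - (a + 1), by omega⟩
        have hc' : Nat.Coprime (a + 1) t := by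
          rwa [show a + 1 + t = t + (a + 1) by ring, Nat.coprime_add_self_right] at hc
        have hrecur : IsCoprime (U (a + 1)) (U t) := by
          apply ih (a + 1) t (by omega) hc'
        exact step a t hrecur
    intro m k hle hc
    rcases lt_trichotomy m k with h | h | h
    · exact main m k h hle hc
    · subst h
      have : m = 1 := by
        have h' := hc
        rwa [Nat.Coprime, Nat.gcd_self] at h'
      subst this; rw [h1]; exact isCoprime_one_left
    · exact (main k m h (by omega) hc.symm).symm

end Aux

theorem lucas_valuation_at_prime_dividing_A
    (P Q : ℤ) (hQ : Q = 1 ∨ Q = -1)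
    (U : ℕ → ℤ) (h0 : U 0 = 0) (h1 : U 1 = 1)
    (hrec : ∀ n, U (n + 2) = P * U (n + 1) + Q * U n)
    (A : ℤ) (hA : A ≠ 0)
    (r : ℕ) (n : Fin r → ℕ) (hpos : ∀ i, 0 < n i)
    (hcop : ∀ i j, i ≠ j → Nat.Coprime (n i) (n j))
    (hne : ∀ i, U (n i) ≠ 0)
    (y : ℤ) (heq : A * y ^ 2 = ∏ i, U (n i))
    (p : ℕ) (hp : p.Prime) (hpA : (p : ℤ) ∣ A) :
    ∃ j, (p : ℤ) ∣ U (n j) ∧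
      (∀ i, (p : ℤ) ∣ U (n i) → i = j) ∧
      padicValInt p (U (n j)) % 2 = padicValInt p A % 2 ∧
      padicValInt p A ≤ padicValInt p (U (n j)) := by
  haveI : Fact p.Prime := ⟨hp⟩
  have hpZ : Prime (p : ℤ) := Int.prime_iff_natAbs_prime.mpr (by simpa using hp)
  have hprod_ne : (∏ i, U (n i)) ≠ 0 := by
    rw [Finset.prod_ne_zero_iff]; exact fun i _ => hne i
  have hy : y ≠ 0 := by
    rintro rfl
    simp at heq
    exact hprod_ne heq.symm
  -- existence of j
  have hpd : (p : ℤ) ∣ ∏ i, U (n i) := heq ▸ hpA.mul_right _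
  obtain ⟨j, -, hj⟩ := hpZ.exists_mem_finset_dvd hpd
  have huniq : ∀ i, (p : ℤ) ∣ U (n i) → i = j := by
    intro i hi
    by_contra hij
    have hcij := lucas_cop hQ h0 h1 hrec (n i) (n j) (hcop i j hij)
    have := hcij.isUnit_of_dvd' hi hj
    rw [Int.isUnit_iff] at this
    rcases this with h | h
    · exact hp.one_lt.ne' (by exact_mod_cast h)
    · have : (0:ℤ) < p := by exact_mod_cast hp.pos
      omega
  refine ⟨j, hj, huniq, ?_, ?_⟩ <;>
  · have hB : (p : ℤ) ∣ U (n j) := hj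
    have hsplit : ∏ i, U (n i) = U (n j) * ∏ i ∈ Finset.univ.erase j, U (n i) :=
      (Finset.mul_prod_erase Finset.univ _ (Finset.mem_univ j)).symm
    set B := ∏ i ∈ Finset.univ.erase j, U (n i) with hBdef
    have hBne : B ≠ 0 := by
      rw [hBdef, Finset.prod_ne_zero_iff]; exact fun i _ => hne i
    have hpB : ¬ (p : ℤ) ∣ B := by
      intro hdvd
      obtain ⟨i, hi, hdi⟩ := hpZ.exists_mem_finset_dvd hdvd
      exact (Finset.ne_of_mem_erase hi) (huniq i hdi)
    have hvB : padicValInt p B = 0 := padicValInt.eq_zero_of_not_dvd hpB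
    have hy2 : y ^ 2 ≠ 0 := pow_ne_zero 2 hy
    have key : padicValInt p A + 2 * padicValInt p y
        = padicValInt p (U (n j)) := by
      have lhs : padicValInt p (A * y ^ 2)
          = padicValInt p A + 2 * padicValInt p y := by
        rw [padicValInt.mul hA hy2, sq, padicValInt.mul hy hy]; ring
      have rhs : padicValInt p (A * y ^ 2) = padicValInt p (U (n j)) := by
        rw [heq, hsplit, padicValInt.mul (hne j) hBne, hvB, add_zero]
      omega
    omega
end
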